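/- Suppose p = √2−1. Then for every positive integer x, P(S_n ≥ x for some n ≥ 1) = 1 and P(S_n ≤ −x for some n ≥ 1) = 1. -/

import Mathlib

/-!
For `p = √2 - 1` the process `M_n = S_n + p · 1[ξ_n = 1]` is a martingale for the natural
filtration of `ξ`: the correction term anticipates the drift of the next step, and cancels it
exactly when `p (p + 2) = 1`. The increments of `M` lie between `1` and `2 + |p|` in absolute
value, so `M` converges nowhere, and by the dichotomy for martingales with bounded increments
(convergence or unbounded oscillation) it is a.s. unbounded above and below. Since `M_n` stays
within `|p|` of `S_n`, the chain crosses every level.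
-/

open MeasureTheory ProbabilityTheory Filter
open scoped ENNReal Classical

noncomputable section

variable {Ω : Type*} [MeasurableSpace Ω]

/-- The `k`-th step of the ladder chain `L(2,2,p)` built from the driving
sequence `ξ` (indexed from 1): `X₁ = ±1` according to `ξ₁`, and for `k ≥ 2`,
`X_k = -1` if `ξ_k = -1`, `X_k = 2` if `ξ_k = ξ_{k-1} = 1`, and `X_k = 1`
if `ξ_k = 1, ξ_{k-1} = -1`. -/
def ladderX (ξ : ℕ → Ω → ℤ) (k : ℕ) (ω : Ω) : ℤ :=
  if k = 1 then (if ξ 1 ω = 1 then 1 else -1)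
  else if ξ k ω = -1 then -1
  else if ξ (k - 1) ω = 1 then 2 else 1

/-- The ladder chain `S_n = X₁ + ⋯ + X_n` (with `S_0 = 0`). -/
def ladderS (ξ : ℕ → Ω → ℤ) (n : ℕ) (ω : Ω) : ℤ :=
  ∑ k ∈ Finset.Icc 1 n, ladderX ξ k ω

open Topology

section
variable {α : Type*}

lemma not_exists_tendsto_of_le_abs_sub {u : ℕ → ℝ} {ε : ℝ} (hε : 0 < ε)
    (hu : ∀ i, ε ≤ |u (i + 1) - u i|) : ¬∃ c, Tendsto u atTop (𝓝 c) := by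
  rintro ⟨c, hc⟩
  have hdiff : Tendsto (fun i => |u (i + 1) - u i|) atTop (𝓝 0) := by
    simpa using ((hc.comp (tendsto_add_atTop_nat 1)).sub hc).abs
  obtain ⟨i, hi⟩ := (hdiff.eventually_lt_const hε).exists
  exact (hu i).not_gt hi

theorem Martingale.ae_not_bddAbove_and_not_bddBelow {m0 : MeasurableSpace α} {μ : Measure α}
    [IsFiniteMeasure μ] {ℱ : Filtration ℕ m0} {f : ℕ → α → ℝ} (hf : Martingale f ℱ μ)
    {R ε : ℝ} (hε : 0 < ε) (hbdd : ∀ᵐ ω ∂μ, ∀ i, |f (i + 1) ω - f i ω| ≤ R)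
    (hsep : ∀ᵐ ω ∂μ, ∀ i, ε ≤ |f (i + 1) ω - f i ω|) :
    ∀ᵐ ω ∂μ, ¬BddAbove (Set.range fun n => f n ω) ∧ ¬BddBelow (Set.range fun n => f n ω) := by
  have hbdd' : ∀ᵐ ω ∂μ, ∀ i, |f (i + 1) ω - f i ω| ≤ (R.toNNReal : ℝ) := by
    filter_upwards [hbdd] with ω hω i using (hω i).trans (Real.le_coe_toNNReal R)
  filter_upwards [hf.submartingale.bddAbove_iff_exists_tendsto hbdd',
    hf.bddAbove_range_iff_bddBelow_range hbdd', hsep] with ω hconv hsymm hω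
  have habove : ¬BddAbove (Set.range fun n => f n ω) := fun h =>
    not_exists_tendsto_of_le_abs_sub hε hω (hconv.1 h)
  exact ⟨habove, fun h => habove (hsymm.2 h)⟩

theorem condExp_add_mul_eq_of_indep {m mY m0 : MeasurableSpace α} {μ : Measure α}
    [IsFiniteMeasure μ] (hmY : mY ≤ m0) (hm : m ≤ m0) (hind : Indep mY m μ) {U V W : α → ℝ}
    (hU : StronglyMeasurable[mY] U) (hW : StronglyMeasurable[mY] W)
    (hV : StronglyMeasurable[m] V) (hUi : Integrable U μ) (hWi : Integrable W μ)
    (hVWi : Integrable (V * W) μ) :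
    μ[U + V * W | m] =ᵐ[μ] fun ω => μ[U] + V ω * μ[W] := by
  filter_upwards [condExp_add hUi hVWi m, condExp_indep_eq hmY hm hU hind,
    condExp_mul_of_stronglyMeasurable_left hV hVWi hWi, condExp_indep_eq hmY hm hW hind]
    with ω h1 h2 h3 h4
  simp only [h1, Pi.add_apply, h2, h3, Pi.mul_apply, h4]

/-- `ξ 0` is not part of the chain, so step `0` counts as a down step. -/
def ladderUp (ξ : ℕ → α → ℤ) (n : ℕ) (ω : α) : ℝ :=
  if n ≠ 0 ∧ ξ n ω = 1 then 1 else 0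

def ladderMart (p : ℝ) (ξ : ℕ → α → ℤ) (n : ℕ) (ω : α) : ℝ :=
  ladderS ξ n ω + p * ladderUp ξ n ω

variable {p : ℝ} {ξ : ℕ → α → ℤ}

lemma ladderUp_eq_zero_or_one (n : ℕ) (ω : α) : ladderUp ξ n ω = 0 ∨ ladderUp ξ n ω = 1 := by
  unfold ladderUp; split_ifs <;> simp

lemma ladderX_succ_eq (hval : ∀ n ω, ξ n ω = 1 ∨ ξ n ω = -1) (n : ℕ) (ω : α) :
    (ladderX ξ (n + 1) ω : ℝ) =
      -1 + 2 * ladderUp ξ (n + 1) ω + ladderUp ξ n ω * ladderUp ξ (n + 1) ω := by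
  rcases Nat.eq_zero_or_pos n with rfl | hn
  · rcases hval 1 ω with h | h <;> norm_num [ladderX, ladderUp, h]
  · rcases hval (n + 1) ω with h | h <;> rcases hval n ω with h' | h' <;>
      norm_num [ladderX, ladderUp, hn.ne', h, h']

lemma ladderMart_zero (ω : α) : ladderMart p ξ 0 ω = 0 := by
  simp [ladderMart, ladderS, ladderUp]

lemma ladderMart_succ (hval : ∀ n ω, ξ n ω = 1 ∨ ξ n ω = -1) (n : ℕ) (ω : α) :
    ladderMart p ξ (n + 1) ω = ladderMart p ξ n ω +
      ((-1 + (2 + p) * ladderUp ξ (n + 1) ω) + ladderUp ξ n ω * (ladderUp ξ (n + 1) ω - p)) := by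
  rw [ladderMart, ladderMart, ladderS, Finset.sum_Icc_succ_top (by omega), Int.cast_add,
    ladderX_succ_eq hval, ← ladderS]
  ring

lemma abs_ladderMart_succ_sub_le (hval : ∀ n ω, ξ n ω = 1 ∨ ξ n ω = -1) (n : ℕ) (ω : α) :
    |ladderMart p ξ (n + 1) ω - ladderMart p ξ n ω| ≤ 2 + |p| := by
  rw [ladderMart_succ hval, add_sub_cancel_left, abs_le]
  rcases ladderUp_eq_zero_or_one (ξ := ξ) n ω with h | h <;>
    rcases ladderUp_eq_zero_or_one (ξ := ξ) (n + 1) ω with h' | h' <;>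
    rw [h, h'] <;> constructor <;> linarith [le_abs_self p, neg_abs_le p]

lemma one_le_abs_ladderMart_succ_sub (hp0 : 0 ≤ p) (hval : ∀ n ω, ξ n ω = 1 ∨ ξ n ω = -1)
    (n : ℕ) (ω : α) : 1 ≤ |ladderMart p ξ (n + 1) ω - ladderMart p ξ n ω| := by
  rw [ladderMart_succ hval, add_sub_cancel_left]
  rcases ladderUp_eq_zero_or_one (ξ := ξ) n ω with h | h <;>
    rcases ladderUp_eq_zero_or_one (ξ := ξ) (n + 1) ω with h' | h' <;>
    rw [h, h', le_abs] <;> first | (left; linarith) | (right; linarith)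

lemma abs_ladderMart_le (hval : ∀ n ω, ξ n ω = 1 ∨ ξ n ω = -1) (n : ℕ) (ω : α) :
    |ladderMart p ξ n ω| ≤ n * (2 + |p|) := by
  induction n with
  | zero => simp [ladderMart_zero]
  | succ n ih =>
    have hstep := abs_ladderMart_succ_sub_le (p := p) hval n ω
    have htri := abs_sub_abs_le_abs_sub (ladderMart p ξ (n + 1) ω) (ladderMart p ξ n ω)
    push_cast
    linarith

lemma abs_ladderMart_sub_ladderS_le (n : ℕ) (ω : α) :
    |ladderMart p ξ n ω - ladderS ξ n ω| ≤ |p| := by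
  rw [ladderMart, add_sub_cancel_left, abs_mul]
  rcases ladderUp_eq_zero_or_one (ξ := ξ) n ω with h | h <;> simp [h]

lemma measurable_ladderUp {m : MeasurableSpace α} {n : ℕ} (hξ : Measurable[m] (ξ n)) :
    Measurable[m] (ladderUp ξ n) :=
  Measurable.ite ((MeasurableSet.const _).inter (hξ (measurableSet_singleton 1)))
    measurable_const measurable_const

lemma measurable_ladderX {m : MeasurableSpace α} {k : ℕ} (hξ : ∀ j ≤ k, Measurable[m] (ξ j))
    (hk : 1 ≤ k) : Measurable[m] (ladderX ξ k) := by
  unfold ladderX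
  refine Measurable.ite ?_ (Measurable.ite ?_ measurable_const measurable_const)
    (Measurable.ite ?_ measurable_const (Measurable.ite ?_ measurable_const measurable_const))
  · exact MeasurableSet.const _
  · exact hξ 1 hk (measurableSet_singleton 1)
  · exact hξ k le_rfl (measurableSet_singleton (-1))
  · exact hξ (k - 1) (Nat.sub_le k 1) (measurableSet_singleton 1)

lemma measurable_ladderMart {m : MeasurableSpace α} {n : ℕ}
    (hξ : ∀ k ≤ n, Measurable[m] (ξ k)) : Measurable[m] (ladderMart p ξ n) := by
  have hS : Measurable[m] (ladderS ξ n) := Finset.measurable_sum _ fun k hk =>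
    measurable_ladderX (fun j hj => hξ j (hj.trans (Finset.mem_Icc.1 hk).2))
      (Finset.mem_Icc.1 hk).1
  exact ((measurable_of_countable _).comp hS).add
    (measurable_const.mul (measurable_ladderUp (hξ n le_rfl)))

lemma abs_ladderUp_le_one (n : ℕ) (ω : α) : |ladderUp ξ n ω| ≤ 1 := by
  rcases ladderUp_eq_zero_or_one (ξ := ξ) n ω with h | h <;> simp [h]

lemma integrable_ladderUp [MeasurableSpace α] {μ : Measure α} [IsFiniteMeasure μ] {n : ℕ}
    (hξ : Measurable (ξ n)) : Integrable (ladderUp ξ n) μ :=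
  Integrable.of_bound (measurable_ladderUp hξ).aestronglyMeasurable 1
    (ae_of_all _ (abs_ladderUp_le_one n))

lemma integrable_ladderMart [MeasurableSpace α] {μ : Measure α} [IsFiniteMeasure μ]
    (hmeas : ∀ n, Measurable (ξ n)) (hval : ∀ n ω, ξ n ω = 1 ∨ ξ n ω = -1) (n : ℕ) :
    Integrable (ladderMart p ξ n) μ :=
  Integrable.of_bound (measurable_ladderMart fun k _ => hmeas k).aestronglyMeasurable _
    (ae_of_all _ (abs_ladderMart_le hval n))

lemma integral_ladderUp_succ [MeasurableSpace α] {μ : Measure α} (hp0 : 0 ≤ p) {n : ℕ}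
    (hξ : Measurable (ξ (n + 1))) (hprob : μ {ω | ξ (n + 1) ω = 1} = ENNReal.ofReal p) :
    ∫ ω, ladderUp ξ (n + 1) ω ∂μ = p := by
  have hind : ladderUp ξ (n + 1) = (ξ (n + 1) ⁻¹' {1}).indicator 1 := by
    ext ω
    simp [ladderUp, Set.indicator_apply]
  rw [hind, integral_indicator_one (hξ (measurableSet_singleton 1)), measureReal_def]
  exact (congrArg ENNReal.toReal hprob).trans (ENNReal.toReal_ofReal hp0)

theorem ladderMart_martingale [MeasurableSpace α] {μ : Measure α} [IsProbabilityMeasure μ]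
    (hp0 : 0 ≤ p) (hcrit : p * (p + 2) = 1) (hmeas : ∀ n, Measurable (ξ n))
    (hindep : iIndepFun ξ μ) (hval : ∀ n ω, ξ n ω = 1 ∨ ξ n ω = -1)
    (hprob : ∀ n, 1 ≤ n → μ {ω | ξ n ω = 1} = ENNReal.ofReal p) :
    Martingale (ladderMart p ξ)
      (Filtration.natural ξ fun n => (hmeas n).stronglyMeasurable) μ := by
  set 𝒢 := Filtration.natural ξ fun n => (hmeas n).stronglyMeasurable
  have hξ𝒢 : ∀ n k, k ≤ n → Measurable[𝒢 n] (ξ k) := fun n k hk =>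
    ((Filtration.stronglyAdapted_natural _ k).mono (𝒢.mono hk)).measurable
  have hint : ∀ n, Integrable (ladderMart p ξ n) μ := integrable_ladderMart hmeas hval
  refine martingale_nat (fun n => (measurable_ladderMart (hξ𝒢 n)).stronglyMeasurable) hint
    fun n => ?_
  set U : α → ℝ := fun ω => -1 + (2 + p) * ladderUp ξ (n + 1) ω
  set W : α → ℝ := fun ω => ladderUp ξ (n + 1) ω - p
  have hstep : ladderMart p ξ (n + 1) = ladderMart p ξ n + (U + ladderUp ξ n * W) :=
    funext (ladderMart_succ hval n)
  have hnext : Measurable[MeasurableSpace.comap (ξ (n + 1)) inferInstance]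
      (ladderUp ξ (n + 1)) :=
    measurable_ladderUp (comap_measurable _)
  have hnexti : Integrable (ladderUp ξ (n + 1)) μ := integrable_ladderUp (hmeas _)
  have hUi : Integrable U μ := (integrable_const _).add (hnexti.const_mul _)
  have hWi : Integrable W μ := hnexti.sub (integrable_const _)
  have hVWi : Integrable (ladderUp ξ n * W) μ :=
    hWi.bdd_mul (measurable_ladderUp (hmeas n)).aestronglyMeasurable
      (ae_of_all _ (abs_ladderUp_le_one n))
  have hEnext := integral_ladderUp_succ hp0 (hmeas _) (hprob (n + 1) (by omega)) (μ := μ)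
  have hEU : μ[U] = 0 := by
    simp only [U]
    rw [integral_add (integrable_const _) (hnexti.const_mul _), integral_const_mul, hEnext,
      integral_const, probReal_univ, smul_eq_mul, one_mul]
    linear_combination hcrit
  have hEW : μ[W] = 0 := by
    simp only [W]
    rw [integral_sub hnexti (integrable_const _), hEnext, integral_const, probReal_univ,
      smul_eq_mul, one_mul, sub_self]
  have hce := condExp_add_mul_eq_of_indep (U := U) (W := W) (hmeas (n + 1)).comap_le (𝒢.le n)
    (hindep.indep_comap_natural_of_lt _ n.lt_succ_self)
    (measurable_const.add (measurable_const.mul hnext)).stronglyMeasurable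
    (hnext.sub measurable_const).stronglyMeasurable
    (measurable_ladderUp (hξ𝒢 n n le_rfl)).stronglyMeasurable hUi hWi hVWi
  rw [hstep]
  filter_upwards [condExp_add (hint n) (hUi.add hVWi) (𝒢 n), hce] with ω h1 h2
  rw [h1, Pi.add_apply, condExp_of_stronglyMeasurable (𝒢.le n)
    (measurable_ladderMart (hξ𝒢 n)).stronglyMeasurable (hint n), h2, hEU, hEW]
  simp

lemma exists_le_ladderS_of_not_bddAbove {ω : α}
    (h : ¬BddAbove (Set.range fun n => ladderMart p ξ n ω)) (x : ℤ) :
    ∃ n, 1 ≤ n ∧ x ≤ ladderS ξ n ω := by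
  obtain ⟨_, ⟨n, rfl⟩, hn⟩ := not_bddAbove_iff.1 h (|(x : ℝ)| + |p|)
  have hdev := abs_le.1 (abs_ladderMart_sub_ladderS_le (p := p) (ξ := ξ) n ω)
  have hx := le_abs_self (x : ℝ)
  refine ⟨n, Nat.one_le_iff_ne_zero.2 ?_, ?_⟩
  · rintro rfl
    simp only [ladderMart_zero] at hn
    linarith [abs_nonneg (x : ℝ), abs_nonneg p]
  · exact_mod_cast (show (x : ℝ) < ladderS ξ n ω by linarith).le

lemma exists_ladderS_le_of_not_bddBelow {ω : α}
    (h : ¬BddBelow (Set.range fun n => ladderMart p ξ n ω)) (x : ℤ) :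
    ∃ n, 1 ≤ n ∧ ladderS ξ n ω ≤ -x := by
  obtain ⟨_, ⟨n, rfl⟩, hn⟩ := not_bddBelow_iff.1 h (-(|(x : ℝ)| + |p|))
  have hdev := abs_le.1 (abs_ladderMart_sub_ladderS_le (p := p) (ξ := ξ) n ω)
  have hx := le_abs_self (x : ℝ)
  refine ⟨n, Nat.one_le_iff_ne_zero.2 ?_, ?_⟩
  · rintro rfl
    simp only [ladderMart_zero] at hn
    linarith [abs_nonneg (x : ℝ), abs_nonneg p]
  · exact_mod_cast (show (ladderS ξ n ω : ℝ) < -x by linarith).le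

end

theorem ladder_critical_reaches_any_level_general (p : ℝ) (hp : p = Real.sqrt 2 - 1)
    (P : Measure Ω) [IsProbabilityMeasure P]
    (ξ : ℕ → Ω → ℤ) (hmeas : ∀ n, Measurable (ξ n))
    (hindep : iIndepFun ξ P)
    (hval : ∀ n ω, ξ n ω = 1 ∨ ξ n ω = -1)
    (hprob : ∀ n, 1 ≤ n → P {ω | ξ n ω = 1} = ENNReal.ofReal p)
    (x : ℤ) :
    P {ω | ∃ n, 1 ≤ n ∧ x ≤ ladderS ξ n ω} = 1 ∧
    P {ω | ∃ n, 1 ≤ n ∧ ladderS ξ n ω ≤ -x} = 1 := by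
  have hsqrt : Real.sqrt 2 ^ 2 = 2 := Real.sq_sqrt zero_le_two
  have hp0 : 0 ≤ p := by
    rw [hp, sub_nonneg]
    exact Real.le_sqrt_of_sq_le (by norm_num)
  have hcrit : p * (p + 2) = 1 := by rw [hp]; linear_combination hsqrt
  have hunbdd := Martingale.ae_not_bddAbove_and_not_bddBelow
    (ladderMart_martingale hp0 hcrit hmeas hindep hval hprob) one_pos
    (ae_of_all _ fun ω n => abs_ladderMart_succ_sub_le hval n ω)
    (ae_of_all _ fun ω n => one_le_abs_ladderMart_succ_sub hp0 hval n ω)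
  refine ⟨(measure_congr (eventuallyEq_univ.2 ?_)).trans measure_univ,
    (measure_congr (eventuallyEq_univ.2 ?_)).trans measure_univ⟩
  · filter_upwards [hunbdd] with ω hω using exists_le_ladderS_of_not_bddAbove hω.1 x
  · filter_upwards [hunbdd] with ω hω using exists_ladderS_le_of_not_bddBelow hω.2 x

/-- If `p = √2 - 1`, then for every positive integer `x`,
the ladder chain a.s. eventually reaches level `x` and a.s. eventually
reaches level `-x`. -/
theorem ladder_critical_reaches_any_level (p : ℝ) (hp : p = Real.sqrt 2 - 1)
    (P : Measure Ω) [IsProbabilityMeasure P]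
    (ξ : ℕ → Ω → ℤ) (hmeas : ∀ n, Measurable (ξ n))
    (hindep : iIndepFun ξ P)
    (hval : ∀ n ω, ξ n ω = 1 ∨ ξ n ω = -1)
    (hprob : ∀ n, 1 ≤ n → P {ω | ξ n ω = 1} = ENNReal.ofReal p)
    (x : ℤ) (hx : 0 < x) :
    P {ω | ∃ n, 1 ≤ n ∧ x ≤ ladderS ξ n ω} = 1 ∧
    P {ω | ∃ n, 1 ≤ n ∧ ladderS ξ n ω ≤ -x} = 1 :=
  ladder_critical_reaches_any_level_general p hp P ξ hmeas hindep hval hprob x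

end
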